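/- Let N ∈ {2,3}. There exists a function b ∈ C²_c((0,1), ℝ) (twice continuously differentiable with compact support in (0,1)) such that ∫_0^1 [ r³ (b″(r))² + ((N² − 2N + 4)/2) r (b′(r))² + ((N−4)(N³ + 12N − 16)/(16 r)) b(r)² ] dr < 0. -/

import Mathlib

open MeasureTheory Metric Set

noncomputable section

/-- `ℝ^N` with the Euclidean structure. -/
abbrev Euc (N : ℕ) : Type := EuclideanSpace ℝ (Fin N)

/-- The surface measure `σ` on the unit sphere `S^{N-1} ⊆ ℝ^N`. -/
def sphMeasure (N : ℕ) : Measure (Metric.sphere (0 : Euc N) 1) :=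
  (volume : Measure (Euc N)).toSphere

/-- The Laplacian `Δ v` of a scalar function on `ℝ^N`. -/
def lap {N : ℕ} (v : Euc N → ℝ) (x : Euc N) : ℝ :=
  ∑ i : Fin N, fderiv ℝ (fun y => fderiv ℝ v y (EuclideanSpace.single i 1)) x
    (EuclideanSpace.single i 1)

/-- The squared Frobenius norm `|∇U|²` of the differential of a map `U`. -/
def gradSq {N M : ℕ} (U : Euc N → Euc M) (x : Euc N) : ℝ :=
  ∑ i : Fin N, ‖fderiv ℝ U x (EuclideanSpace.single i 1)‖ ^ 2


/-!
Substituting `r = exp (-t)` turns the form into `∫ (ψ'' + ψ')² + A ψ'² + B ψ²` over `t > 0`,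
where `b r = ψ (-log r)`. Stretching a fixed bump, `ψ t = φ (ε t)`, multiplies the derivative
terms by positive powers of `ε`, so the form equals `ε⁻¹ (B ∫ φ² + o(1))` as `ε → 0`. It is
therefore negative for small `ε` as soon as the zeroth-order coefficient
`B = (N - 4)(N³ + 12N - 16)/16` is negative, which is the case for `N ∈ {2, 3}`.
-/

open Real Filter Topology

/-- The pullback of `ψ` along `r ↦ -log r`; the `if` is needed because `log r = log |r|`
for `r < 0`. -/
def logPullback (ψ : ℝ → ℝ) (r : ℝ) : ℝ := if 0 < r then ψ (-log r) else 0

def radialForm (A B : ℝ) (b : ℝ → ℝ) : ℝ :=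
  ∫ r in Ioo (0 : ℝ) 1, (r ^ 3 * deriv (deriv b) r ^ 2 + A * r * deriv b r ^ 2 + B / r * b r ^ 2)

/-- The integrand of `radialForm A B (logPullback (fun t => φ (ε * t)))` after the substitution
`r = exp (-s / ε)`, up to the factor `ε⁻¹`. -/
def logDensity (A B : ℝ) (φ : ℝ → ℝ) (ε s : ℝ) : ℝ :=
  (ε ^ 2 * deriv (deriv φ) s + ε * deriv φ s) ^ 2 + A * (ε * deriv φ s) ^ 2 + B * φ s ^ 2

section LogPullback

variable {ψ : ℝ → ℝ}

lemma logPullback_of_pos {r : ℝ} (hr : 0 < r) : logPullback ψ r = ψ (-log r) := if_pos hr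

lemma logPullback_eventuallyEq {r : ℝ} (hr : 0 < r) :
    logPullback ψ =ᶠ[𝓝 r] fun r => ψ (-log r) :=
  eventually_of_mem (Ioi_mem_nhds hr) fun _ => logPullback_of_pos

lemma logPullback_eq_zero_of_notMem {r : ℝ}
    (hr : r ∉ (fun t => exp (-t)) '' tsupport ψ) : logPullback ψ r = 0 := by
  unfold logPullback
  split_ifs with h
  · by_contra hne
    exact hr ⟨-log r, subset_tsupport ψ hne, by simp [exp_log h]⟩
  · rfl

lemma isCompact_image_exp_neg_tsupport (hψ : HasCompactSupport ψ) :
    IsCompact ((fun t => exp (-t)) '' tsupport ψ) :=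
  hψ.isCompact.image (by fun_prop)

lemma hasCompactSupport_logPullback (hψ : HasCompactSupport ψ) :
    HasCompactSupport (logPullback ψ) :=
  .intro (isCompact_image_exp_neg_tsupport hψ) fun _ => logPullback_eq_zero_of_notMem

lemma tsupport_logPullback_subset (hψ : HasCompactSupport ψ) (hψ₀ : tsupport ψ ⊆ Ioi 0) :
    tsupport (logPullback ψ) ⊆ Ioo 0 1 := by
  refine (closure_minimal (fun r hr => ?_) (isCompact_image_exp_neg_tsupport hψ).isClosed).trans ?_
  · by_contra h
    exact hr (logPullback_eq_zero_of_notMem h)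
  · rintro _ ⟨t, ht, rfl⟩
    exact ⟨exp_pos _, exp_lt_one_iff.mpr (neg_lt_zero.mpr (hψ₀ ht))⟩

lemma contDiff_logPullback {n : WithTop ℕ∞} (hψ : HasCompactSupport ψ) (hd : ContDiff ℝ n ψ) :
    ContDiff ℝ n (logPullback ψ) := by
  rw [contDiff_iff_contDiffAt]
  intro r
  rcases lt_or_ge 0 r with hr | hr
  · exact (hd.contDiffAt.comp r (contDiffAt_log.mpr hr.ne').neg).congr_of_eventuallyEq
      (logPullback_eventuallyEq hr)
  · have hr' : r ∈ ((fun t => exp (-t)) '' tsupport ψ)ᶜ := by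
      rintro ⟨t, -, rfl⟩
      exact (exp_pos _).not_ge hr
    have hopen := (isCompact_image_exp_neg_tsupport hψ).isClosed.isOpen_compl
    exact (contDiffAt_const (c := (0 : ℝ))).congr_of_eventuallyEq <|
      eventually_of_mem (hopen.mem_nhds hr') fun _ => logPullback_eq_zero_of_notMem

lemma deriv_logPullback (hψ : Differentiable ℝ ψ) {r : ℝ} (hr : 0 < r) :
    deriv (logPullback ψ) r = -deriv ψ (-log r) / r := by
  have h : HasDerivAt (fun r => ψ (-log r)) (deriv ψ (-log r) * -r⁻¹) r :=
    (hψ (-log r)).hasDerivAt.comp r (hasDerivAt_log hr.ne').neg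
  rw [(logPullback_eventuallyEq hr).deriv_eq, h.deriv]
  ring

lemma deriv_deriv_logPullback (hψ : ContDiff ℝ 2 ψ) {r : ℝ} (hr : 0 < r) :
    deriv (deriv (logPullback ψ)) r = (deriv (deriv ψ) (-log r) + deriv ψ (-log r)) / r ^ 2 := by
  have hev : deriv (logPullback ψ) =ᶠ[𝓝 r] fun r => -deriv ψ (-log r) / r :=
    eventually_of_mem (Ioi_mem_nhds hr) fun _ => deriv_logPullback (hψ.differentiable two_ne_zero)
  have hd : DifferentiableAt ℝ (deriv ψ) (-log r) := hψ.differentiable_deriv_two _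
  have hg : HasDerivAt (fun r => deriv ψ (-log r)) (deriv (deriv ψ) (-log r) * -r⁻¹) r :=
    HasDerivAt.comp (h₂ := deriv ψ) r hd.hasDerivAt (hasDerivAt_log hr.ne').neg
  have h : HasDerivAt (fun r => -deriv ψ (-log r) / r)
      ((-(deriv (deriv ψ) (-log r) * -r⁻¹) * r - -deriv ψ (-log r) * 1) / r ^ 2) r :=
    hg.neg.div (hasDerivAt_id' r) hr.ne'
  rw [hev.deriv_eq, h.deriv]
  field_simp
  ring

end LogPullback

lemma integral_Ioo_zero_one_inv_mul_comp_neg_log (G : ℝ → ℝ) :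
    ∫ r in Ioo (0 : ℝ) 1, r⁻¹ * G (-log r) = ∫ t in Ioi 0, G t := by
  have himage : (fun t => exp (-t)) '' Ioi 0 = Ioo 0 1 := by
    ext r
    constructor
    · rintro ⟨t, ht, rfl⟩
      exact ⟨exp_pos _, exp_lt_one_iff.mpr (neg_lt_zero.mpr ht)⟩
    · rintro ⟨h0, h1⟩
      exact ⟨-log r, neg_pos.mpr (log_neg h0 h1), by simp [exp_log h0]⟩
  rw [← himage, integral_image_eq_integral_abs_deriv_smul measurableSet_Ioi
    (fun t _ => (hasDerivAt_neg t).exp.hasDerivWithinAt) (exp_injective.comp neg_injective).injOn]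
  refine setIntegral_congr_fun measurableSet_Ioi fun t _ => ?_
  simp [abs_of_pos (exp_pos _)]

lemma radialForm_logPullback (A B : ℝ) {ψ : ℝ → ℝ} (hψ : ContDiff ℝ 2 ψ) :
    radialForm A B (logPullback ψ) = ∫ t in Ioi 0, logDensity A B ψ 1 t := by
  rw [radialForm, ← integral_Ioo_zero_one_inv_mul_comp_neg_log]
  refine setIntegral_congr_fun measurableSet_Ioo fun r hr => ?_
  rw [deriv_deriv_logPullback hψ hr.1, deriv_logPullback (hψ.differentiable two_ne_zero) hr.1,
    logPullback_of_pos hr.1, logDensity]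
  field_simp

section LogDensity

variable {φ : ℝ → ℝ}

lemma logDensity_comp_mul_left (A B ε t : ℝ) :
    logDensity A B (fun t => φ (ε * t)) 1 t = logDensity A B φ ε (ε * t) := by
  have hderiv : ∀ g : ℝ → ℝ, deriv (fun t => g (ε * t)) = fun t => ε * deriv g (ε * t) :=
    fun g => funext fun t => deriv_comp_mul_left ε g t
  simp only [logDensity, hderiv, deriv_const_mul_field']
  ring

lemma integral_logDensity_comp_mul_left (A B : ℝ) {ε : ℝ} (hε : 0 < ε) :
    ∫ t in Ioi 0, logDensity A B (fun t => φ (ε * t)) 1 t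
      = ε⁻¹ * ∫ s in Ioi 0, logDensity A B φ ε s := by
  simp only [logDensity_comp_mul_left]
  rw [integral_comp_mul_left_Ioi (logDensity A B φ ε) 0 hε, mul_zero, smul_eq_mul]

lemma logDensity_eq_zero_of_notMem_tsupport (A B ε : ℝ) {s : ℝ} (hs : s ∉ tsupport φ) :
    logDensity A B φ ε s = 0 := by
  have h1 : deriv φ s = 0 := Function.notMem_support.mp fun h => hs (support_deriv_subset h)
  have h2 : deriv (deriv φ) s = 0 :=
    Function.notMem_support.mp fun h => hs (tsupport_deriv_subset (support_deriv_subset h))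
  simp [logDensity, h1, h2, image_eq_zero_of_notMem_tsupport hs]

lemma continuous_uncurry_logDensity (A B : ℝ) (hφ : ContDiff ℝ 2 φ) :
    Continuous (Function.uncurry (logDensity A B φ)) := by
  have h1 := hφ.continuous_deriv (by norm_num)
  have h2 := hφ.differentiable_deriv_two.continuous
  unfold logDensity
  fun_prop

lemma exists_setIntegral_logDensity_neg (A : ℝ) {B : ℝ} (hB : B < 0) (hφ : ContDiff ℝ 2 φ)
    (hφc : HasCompactSupport φ) {s₀ : ℝ} (hs₀ : φ s₀ ≠ 0) :
    ∃ ε > 0, ∫ s in tsupport φ, logDensity A B φ ε s < 0 := by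
  have hcont : Continuous fun ε => ∫ s in tsupport φ, logDensity A B φ ε s :=
    continuous_parametric_integral_of_continuous (continuous_uncurry_logDensity A B hφ)
      hφc.isCompact
  have hmass : 0 < ∫ s in tsupport φ, φ s ^ 2 := by
    rw [setIntegral_eq_integral_of_forall_compl_eq_zero fun s hs => by
      simp [image_eq_zero_of_notMem_tsupport hs]]
    have hφ2c : HasCompactSupport fun s => φ s ^ 2 := hφc.comp_left (zero_pow two_ne_zero)
    exact (hφ.continuous.pow 2).integral_pos_of_hasCompactSupport_nonneg_nonzero hφ2c
      (fun s => sq_nonneg (φ s)) (pow_ne_zero 2 hs₀)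
  have hzero : ∫ s in tsupport φ, logDensity A B φ 0 s < 0 := by
    have h0 : ∀ s, logDensity A B φ 0 s = B * φ s ^ 2 := fun s => by simp [logDensity]
    simp only [h0, integral_const_mul]
    exact mul_neg_of_neg_of_pos hB hmass
  have hev : ∀ᶠ ε in 𝓝[>] (0 : ℝ), ∫ s in tsupport φ, logDensity A B φ ε s < 0 :=
    nhdsWithin_le_nhds ((hcont.tendsto 0).eventually (gt_mem_nhds hzero))
  obtain ⟨ε, hε, hε0⟩ := (hev.and self_mem_nhdsWithin).exists
  exact ⟨ε, hε0, hε⟩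

end LogDensity

theorem exists_radialForm_neg (A : ℝ) {B : ℝ} (hB : B < 0) :
    ∃ b : ℝ → ℝ, ContDiff ℝ 2 b ∧ HasCompactSupport b ∧ tsupport b ⊆ Ioo 0 1 ∧
      radialForm A B b < 0 := by
  obtain ⟨φ, hφ₀, hφc, hφ, -, hφ1⟩ :=
    exists_contDiff_tsupport_subset (n := 2) (Ioi_mem_nhds (zero_lt_one' ℝ))
  obtain ⟨ε, hε, hneg⟩ :=
    exists_setIntegral_logDensity_neg A hB hφ hφc (s₀ := 1) (by simp [hφ1])
  set ψ : ℝ → ℝ := fun t => φ (ε * t)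
  have hψ : ContDiff ℝ 2 ψ := hφ.comp (contDiff_const.mul contDiff_id)
  have hψc : HasCompactSupport ψ := by simpa only [smul_eq_mul] using hφc.comp_smul hε.ne'
  have hψ₀ : tsupport ψ ⊆ Ioi 0 := fun t ht =>
    pos_of_mul_pos_right (hφ₀ (tsupport_comp_subset_preimage φ (continuous_const_mul ε) ht)) hε.le
  refine ⟨logPullback ψ, contDiff_logPullback hψc hψ, hasCompactSupport_logPullback hψc,
    tsupport_logPullback_subset hψc hψ₀, ?_⟩
  rw [radialForm_logPullback A B hψ, integral_logDensity_comp_mul_left A B hε,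
    setIntegral_eq_of_subset_of_forall_sdiff_eq_zero measurableSet_Ioi hφ₀
      fun s hs => logDensity_eq_zero_of_notMem_tsupport A B ε hs.2]
  exact mul_neg_of_pos_of_neg (inv_pos.mpr hε) hneg

theorem exists_negative_radial_test_function
    {N : ℕ} (hN : N = 2 ∨ N = 3) :
    ∃ b : ℝ → ℝ, ContDiff ℝ 2 b ∧ HasCompactSupport b ∧ tsupport b ⊆ Ioo 0 1 ∧
      (∫ r in Ioo (0 : ℝ) 1,
        (r ^ 3 * (deriv (deriv b) r) ^ 2
          + (((N : ℝ) ^ 2 - 2 * N + 4) / 2) * r * (deriv b r) ^ 2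
          + (((N : ℝ) - 4) * ((N : ℝ) ^ 3 + 12 * N - 16) / (16 * r)) * (b r) ^ 2)) < 0 := by
  have hB : ((N : ℝ) - 4) * ((N : ℝ) ^ 3 + 12 * N - 16) / 16 < 0 := by
    rcases hN with rfl | rfl <;> norm_num
  obtain ⟨b, hb, hbc, hbs, hneg⟩ := exists_radialForm_neg (((N : ℝ) ^ 2 - 2 * N + 4) / 2) hB
  refine ⟨b, hb, hbc, hbs, ?_⟩
  simpa only [radialForm, div_mul_eq_div_div] using hneg
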